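/- Let A and B be wqos such that w(B) ≥ ω is additively indecomposable (i.e., β ⊕ γ < w(B) whenever β, γ < w(B), equivalently w(B) is a power of ω). Then w(A × B) ≥ w(B) · o(A), where A × B is the Cartesian product ordered componentwise and · is ordinal multiplication. -/

import Mathlib

open Ordinal

universe u

/-- Natural (Hessenberg) sum of ordinals, as in the older Mathlib (removed since). -/
noncomputable def Ordinal.nadd : Ordinal.{u} → Ordinal.{u} → Ordinal.{u}
  | a, b =>
    max (⨆ x : Set.Iio a, Order.succ (Ordinal.nadd x.1 b))
      (⨆ x : Set.Iio b, Order.succ (Ordinal.nadd a x.1))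
termination_by a b => (a, b)
decreasing_by
  · exact Prod.Lex.left _ _ x.2
  · exact Prod.Lex.right _ x.2

namespace NaturalOps

infixl:65 " ♯ " => Ordinal.nadd

end NaturalOps

/-- A preordered type is a well-quasi-order when every infinite sequence
contains an increasing pair. -/
def IsWqo (A : Type u) [Preorder A] : Prop :=
  ∀ f : ℕ → A, ∃ i j : ℕ, i < j ∧ f i ≤ f j

/-- In the tree of finite sequences satisfying `P` (ordered by reverse prefix),
`t` is a child of `s` when `t` extends `s` by one element and satisfies `P`. -/
def ExtRel {A : Type u} (P : List A → Prop) (t s : List A) : Prop :=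
  P t ∧ ∃ a : A, t = s ++ [a]

/-- The ordinal rank of the tree of finite sequences satisfying `P`, i.e. the rank of its
root (the empty sequence): the rank of a node is `0` on leaves and otherwise the supremum
of the successors of the ranks of its children.  (Junk value `0` when the tree is not
well-founded; in the statements below the wqo hypotheses guarantee well-foundedness.) -/
noncomputable def treeRank {A : Type u} (P : List A → Prop) : Ordinal.{u} :=
  @dite _ (Acc (ExtRel P) ([] : List A)) (Classical.dec _) (fun h => h.rank) (fun _ => 0)

/-- The maximal order type `o(A)`: the rank of the tree `Bad(A)` of bad sequences. -/
noncomputable def mot (A : Type u) [Preorder A] : Ordinal.{u} :=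
  treeRank (fun l : List A => l.Pairwise (fun a b => ¬ a ≤ b))

/-- The height `h(A)`: the rank of the tree `Dec(A)` of strictly decreasing sequences. -/
noncomputable def height (A : Type u) [Preorder A] : Ordinal.{u} :=
  treeRank (fun l : List A => l.Pairwise (fun a b => b < a))

/-- The width `w(A)`: the rank of the tree `Inco(A)` of sequences of pairwise
incomparable elements. -/
noncomputable def width (A : Type u) [Preorder A] : Ordinal.{u} :=
  treeRank (fun l : List A => l.Pairwise (fun a b => ¬ a ≤ b ∧ ¬ b ≤ a))

open NaturalOps in
theorem Ordinal.nadd_lt_nadd_left {b c : Ordinal.{u}} (h : b < c) (a : Ordinal.{u}) :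
    a ♯ b < a ♯ c := by
  rw [Ordinal.nadd.eq_1 a c]
  refine lt_of_lt_of_le (Order.lt_succ _) (le_trans ?_ (le_max_right _ _))
  exact Ordinal.le_iSup (fun x : Set.Iio c => Order.succ (a ♯ x.1)) ⟨b, h⟩

open NaturalOps in
theorem Ordinal.nadd_lt_nadd_right {b c : Ordinal.{u}} (h : b < c) (a : Ordinal.{u}) :
    b ♯ a < c ♯ a := by
  rw [Ordinal.nadd.eq_1 c a]
  refine lt_of_lt_of_le (Order.lt_succ _) (le_trans ?_ (le_max_left _ _))
  exact Ordinal.le_iSup (fun x : Set.Iio c => Order.succ (x.1 ♯ a)) ⟨b, h⟩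

open NaturalOps in
theorem Ordinal.nadd_le_nadd_left {b c : Ordinal.{u}} (h : b ≤ c) (a : Ordinal.{u}) :
    a ♯ b ≤ a ♯ c := by
  rcases h.lt_or_eq with h | rfl
  · exact (Ordinal.nadd_lt_nadd_left h a).le
  · exact le_rfl

open NaturalOps in
theorem Ordinal.add_le_nadd (a b : Ordinal.{u}) : a + b ≤ a ♯ b := by
  induction b using Ordinal.induction with
  | h b IH =>
    rcases eq_or_ne b 0 with rfl | hb
    · rw [add_zero]
      exact StrictMono.le_apply (f := fun x => x ♯ 0)
        (fun x y h => Ordinal.nadd_lt_nadd_right h 0)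
    · rw [Ordinal.add_le_iff hb]
      intro d hd
      exact lt_of_le_of_lt (IH d hd) (Ordinal.nadd_lt_nadd_left hd a)


set_option linter.unusedSectionVars false
set_option linter.unusedVariables false

namespace WPB

noncomputable def nrank {σ : Type u} (r : σ → σ → Prop) (x : σ) : Ordinal.{u} :=
  @dite _ (Acc r x) (Classical.dec _) (fun h => h.rank) (fun _ => 0)

theorem treeRank_eq_nrank {A : Type u} (P : List A → Prop) :
    treeRank P = nrank (ExtRel P) [] := rfl

variable {σ τ : Type u}

theorem nrank_eq {r : σ → σ → Prop} {x : σ} (h : Acc r x) : nrank r x = h.rank := by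
  rw [nrank, dif_pos h]

theorem nrank_lt_of_rel {r : σ → σ → Prop} {x y : σ} (hx : Acc r x) (h : r y x) :
    nrank r y < nrank r x := by
  rw [nrank_eq hx, nrank_eq (hx.inv h)]
  exact Acc.rank_lt_of_rel hx h

theorem nrank_le_iff {r : σ → σ → Prop} {x : σ} (hx : Acc r x) {c : Ordinal.{u}} :
    nrank r x ≤ c ↔ ∀ y, r y x → nrank r y < c := by
  constructor
  · intro h y hy
    exact lt_of_lt_of_le (nrank_lt_of_rel hx hy) h
  · intro h
    rw [nrank_eq hx, Acc.rank_eq, Ordinal.iSup_le_iff]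
    rintro ⟨y, hy⟩
    rw [Order.succ_le_iff]
    have := h y hy
    rwa [nrank_eq (hx.inv hy)] at this

theorem lt_nrank_iff {r : σ → σ → Prop} {x : σ} (hx : Acc r x) {c : Ordinal.{u}} :
    c < nrank r x ↔ ∃ y, r y x ∧ c ≤ nrank r y := by
  constructor
  · intro h
    rw [nrank_eq hx, Acc.rank_eq, Ordinal.lt_iSup_iff] at h
    obtain ⟨⟨y, hy⟩, h⟩ := h
    rw [Order.lt_succ_iff] at h
    exact ⟨y, hy, by rwa [nrank_eq (hx.inv hy)]⟩
  · rintro ⟨y, hy, h⟩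
    exact lt_of_le_of_lt h (nrank_lt_of_rel hx hy)

theorem sim_aux {r : σ → σ → Prop} {r' : τ → τ → Prop} {f : σ → τ} {Inv : σ → Prop}
    (hstep : ∀ x y, Inv x → r y x → Inv y ∧ r' (f y) (f x)) :
    ∀ t, Acc r' t → ∀ x, Inv x → f x = t → Acc r x ∧ nrank r x ≤ nrank r' t := by
  intro t ht
  induction ht with
  | intro t ht IH =>
    rintro x hx rfl
    have hacct : Acc r' (f x) := Acc.intro _ ht
    have hacc : Acc r x := by
      constructor
      intro y hy
      obtain ⟨hIy, hr'⟩ := hstep x y hx hy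
      exact (IH _ hr' y hIy rfl).1
    refine ⟨hacc, ?_⟩
    rw [nrank_le_iff hacc]
    intro y hy
    obtain ⟨hIy, hr'⟩ := hstep x y hx hy
    exact lt_of_le_of_lt (IH _ hr' y hIy rfl).2 (nrank_lt_of_rel hacct hr')

theorem sim {r : σ → σ → Prop} {r' : τ → τ → Prop} {f : σ → τ} {Inv : σ → Prop}
    (hstep : ∀ x y, Inv x → r y x → Inv y ∧ r' (f y) (f x)) {x : σ}
    (hx : Inv x) (h' : Acc r' (f x)) : Acc r x ∧ nrank r x ≤ nrank r' (f x) :=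
  sim_aux hstep _ h' x hx rfl



theorem acc_of_wqo {C : Type u} [Preorder C] (hw : IsWqo C)
    {R : C → C → Prop} (hR : ∀ a b, R a b → ¬ a ≤ b)
    {P : List C → Prop} (hP : ∀ l, P l → l.Pairwise R) (l : List C) :
    Acc (ExtRel P) l := by
  by_contra h
  have step : ∀ m : List C, ¬ Acc (ExtRel P) m →
      ∃ a, P (m ++ [a]) ∧ ¬ Acc (ExtRel P) (m ++ [a]) := by
    intro m hm
    by_contra hc
    push_neg at hc
    apply hm
    constructor
    rintro t ⟨hPt, a, rfl⟩
    exact hc a hPt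
  let next : {m : List C // ¬ Acc (ExtRel P) m} → {m : List C // ¬ Acc (ExtRel P) m} :=
    fun p => ⟨p.1 ++ [(step p.1 p.2).choose], (step p.1 p.2).choose_spec.2⟩
  let ch : ℕ → {m : List C // ¬ Acc (ExtRel P) m} := fun n => next^[n] ⟨l, h⟩
  let g : ℕ → C := fun n => (step (ch n).1 (ch n).2).choose
  have hch : ∀ n, (ch (n + 1)).1 = (ch n).1 ++ [g n] := by
    intro n
    show (next^[n + 1] ⟨l, h⟩).1 = _
    rw [Function.iterate_succ_apply']

  have hPch : ∀ n, P ((ch (n + 1)).1) := by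
    intro n
    rw [hch n]
    exact (step (ch n).1 (ch n).2).choose_spec.1
  have hpre : ∀ i j : ℕ, i ≤ j → (ch i).1 <+: (ch j).1 := by
    intro i j hij
    induction j, hij using Nat.le_induction with
    | base => exact List.prefix_rfl
    | succ n hn IH => exact IH.trans (by rw [hch n]; exact List.prefix_append _ _)
  have hbad : ∀ i j : ℕ, i < j → ¬ g i ≤ g j := by
    intro i j hij
    have h1 : (ch (i + 1)).1 <+: (ch j).1 := hpre _ _ hij
    obtain ⟨v, hv⟩ := h1
    have h2 : (ch (j + 1)).1 = (ch (i + 1)).1 ++ (v ++ [g j]) := by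
      rw [hch j, ← hv, List.append_assoc]
    have hpair : ((ch (i + 1)).1 ++ (v ++ [g j])).Pairwise R := by
      rw [← h2]; exact hP _ (hPch j)
    have hgi : g i ∈ (ch (i + 1)).1 := by
      rw [hch i]; exact List.mem_append_right _ (List.mem_singleton_self _)
    have hgj : g j ∈ v ++ [g j] := List.mem_append_right _ (List.mem_singleton_self _)
    exact hR _ _ ((List.pairwise_append.1 hpair).2.2 _ hgi _ hgj)
  obtain ⟨i, j, hij, hle⟩ := hw g
  exact hbad i j hij hle

theorem isWqo_prod {A B : Type u} [Preorder A] [Preorder B] (hA : IsWqo A) (hB : IsWqo B) :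
    IsWqo (A × B) := by
  intro f
  have hA' : (Set.univ : Set A).PartiallyWellOrderedOn (· ≤ ·) := fun g => hA (fun n => (g n).1)
  obtain ⟨g, hg⟩ := hA'.exists_monotone_subseq (f := fun n => (f n).1) (fun n => trivial)
  obtain ⟨i, j, hij, hle⟩ := hB (fun n => (f (g n)).2)
  exact ⟨g i, g j, g.strictMono hij, hg i j hij.le, hle⟩

open NaturalOps in
theorem nrank_gameAdd_le {σ τ : Type u} {r₁ : σ → σ → Prop} {r₂ : τ → τ → Prop} :
    ∀ {x : σ} {y : τ}, Acc r₁ x → Acc r₂ y →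
      nrank (Prod.GameAdd r₁ r₂) (x, y) ≤ nrank r₁ x ♯ nrank r₂ y := by
  intro x y hx
  induction hx generalizing y with
  | intro x hx IH1 =>
    intro hy
    induction hy with
    | intro y hy IH2 =>
      have hax : Acc r₁ x := Acc.intro x hx
      have hay : Acc r₂ y := Acc.intro y hy
      have hacc := hax.prod_gameAdd hay
      rw [nrank_le_iff hacc]
      rintro ⟨p, q⟩ hpq
      cases hpq with
      | fst h1 =>
        exact lt_of_le_of_lt (IH1 _ h1 hay)
          (Ordinal.nadd_lt_nadd_right (nrank_lt_of_rel hax h1) _)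
      | snd h2 =>
        exact lt_of_le_of_lt (IH2 _ h2)
          (Ordinal.nadd_lt_nadd_left (nrank_lt_of_rel hay h2) _)

variable {C : Type u} [Preorder C]

def badP (X : Set C) (l : List C) : Prop :=
  l.Pairwise (fun a b => ¬ a ≤ b) ∧ ∀ a ∈ l, a ∈ X

def incP (Y : Set C) (m : List C) : Prop :=
  m.Pairwise (fun a b => ¬ a ≤ b ∧ ¬ b ≤ a) ∧ ∀ b ∈ m, b ∈ Y

noncomputable def oS (X : Set C) : Ordinal.{u} := nrank (ExtRel (badP X)) []

noncomputable def wS (Y : Set C) : Ordinal.{u} := nrank (ExtRel (incP Y)) []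

theorem accBad (hw : IsWqo C) (X : Set C) (l : List C) : Acc (ExtRel (badP X)) l :=
  acc_of_wqo hw (R := fun a b => ¬ a ≤ b) (fun _ _ h => h) (fun _ h => h.1) l

theorem accInc (hw : IsWqo C) (Y : Set C) (m : List C) : Acc (ExtRel (incP Y)) m :=
  acc_of_wqo hw (R := fun a b => ¬ a ≤ b ∧ ¬ b ≤ a) (fun _ _ h => h.1) (fun _ h => h.1) m

theorem nrank_mono_pred {P Q : List C → Prop} (h : ∀ l, P l → Q l)
    (x : List C) (hacc : Acc (ExtRel Q) x) :
    nrank (ExtRel P) x ≤ nrank (ExtRel Q) x :=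
  (sim (r := ExtRel P) (r' := ExtRel Q) (f := id) (Inv := fun _ => True)
    (fun _ y _ hy => ⟨trivial, ⟨h _ hy.1, hy.2⟩⟩) trivial hacc).2

theorem wS_mono (hw : IsWqo C) {Y₁ Y₂ : Set C} (h : Y₁ ⊆ Y₂) : wS Y₁ ≤ wS Y₂ :=
  nrank_mono_pred (fun _ hl => ⟨hl.1, fun b hb => h (hl.2 b hb)⟩) [] (accInc hw Y₂ [])

open NaturalOps in
theorem wS_partition (hw : IsWqo C) {Y Y₁ Y₂ : Set C} (h : Y ⊆ Y₁ ∪ Y₂) :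
    wS Y ≤ wS Y₁ ♯ wS Y₂ := by
  classical
  set r₁ := ExtRel (incP Y₁) with hr₁
  set r₂ := ExtRel (incP Y₂) with hr₂
  set f : List C → List C × List C :=
    fun l => (l.filter (fun y => decide (y ∈ Y₁)),
              l.filter (fun y => decide (y ∈ Y₂ ∧ y ∉ Y₁))) with hf
  have hstep : ∀ x y, incP Y x → ExtRel (incP Y) y x →
      incP Y y ∧ Prod.GameAdd r₁ r₂ (f y) (f x) := by
    rintro x y hx ⟨hPy, a, rfl⟩
    refine ⟨hPy, ?_⟩
    have ha : a ∈ Y := hPy.2 a (List.mem_append_right _ (List.mem_singleton_self _))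
    have hsub1 : ∀ (l : List C) (p : C → Bool), incP Y l → (l.filter p).Pairwise
        (fun a b => ¬ a ≤ b ∧ ¬ b ≤ a) := fun l p hl => hl.1.sublist List.filter_sublist
    rcases h ha with haY1 | haY2
    · have e1 : (x ++ [a]).filter (fun y => decide (y ∈ Y₁)) =
          x.filter (fun y => decide (y ∈ Y₁)) ++ [a] := by
        rw [List.filter_append]; simp [haY1]
      have e2 : (x ++ [a]).filter (fun y => decide (y ∈ Y₂ ∧ y ∉ Y₁)) =
          x.filter (fun y => decide (y ∈ Y₂ ∧ y ∉ Y₁)) := by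
        rw [List.filter_append]; simp [haY1]
      rw [hf]
      simp only [e1, e2]
      apply Prod.GameAdd.fst
      refine ⟨⟨?_, ?_⟩, a, rfl⟩
      · rw [← e1]; exact hsub1 _ _ hPy
      · intro b hb
        rw [← e1] at hb
        have := List.of_mem_filter hb
        simpa using this
    by_cases haY1 : a ∈ Y₁
    · have e1 : (x ++ [a]).filter (fun y => decide (y ∈ Y₁)) =
          x.filter (fun y => decide (y ∈ Y₁)) ++ [a] := by
        rw [List.filter_append]; simp [haY1]
      have e2 : (x ++ [a]).filter (fun y => decide (y ∈ Y₂ ∧ y ∉ Y₁)) =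
          x.filter (fun y => decide (y ∈ Y₂ ∧ y ∉ Y₁)) := by
        rw [List.filter_append]; simp [haY1]
      rw [hf]
      simp only [e1, e2]
      apply Prod.GameAdd.fst
      refine ⟨⟨?_, ?_⟩, a, rfl⟩
      · rw [← e1]; exact hsub1 _ _ hPy
      · intro b hb
        rw [← e1] at hb
        have := List.of_mem_filter hb
        simpa using this
    · have e1 : (x ++ [a]).filter (fun y => decide (y ∈ Y₁)) =
          x.filter (fun y => decide (y ∈ Y₁)) := by
        rw [List.filter_append]; simp [haY1]
      have e2 : (x ++ [a]).filter (fun y => decide (y ∈ Y₂ ∧ y ∉ Y₁)) =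
          x.filter (fun y => decide (y ∈ Y₂ ∧ y ∉ Y₁)) ++ [a] := by
        rw [List.filter_append]; simp [haY2, haY1]
      rw [hf]
      simp only [e1, e2]
      apply Prod.GameAdd.snd
      refine ⟨⟨?_, ?_⟩, a, rfl⟩
      · rw [← e2]; exact hsub1 _ _ hPy
      · intro b hb
        rw [← e2] at hb
        have := List.of_mem_filter hb
        simp at this
        exact this.1
  have hacc : Acc (Prod.GameAdd r₁ r₂) (f []) :=
    (accInc hw Y₁ []).prod_gameAdd (accInc hw Y₂ [])
  have hsim := (sim (Inv := incP Y) hstep (x := ([] : List C))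
    ⟨List.Pairwise.nil, by simp⟩ hacc).2
  refine le_trans hsim (le_trans (nrank_gameAdd_le (accInc hw Y₁ []) (accInc hw Y₂ [])) ?_)
  exact le_refl _

theorem wS_chain_le_one (hw : IsWqo C) {Y : Set C}
    (hch : ∀ y ∈ Y, ∀ z ∈ Y, y ≤ z ∨ z ≤ y) : wS Y ≤ 1 := by
  rw [wS, nrank_le_iff (accInc hw Y [])]
  rintro m ⟨hP, a, rfl⟩
  have h0 : nrank (ExtRel (incP Y)) ([] ++ [a]) ≤ 0 := by
    rw [nrank_le_iff (accInc hw Y _)]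
    rintro t ⟨hPt, b, rfl⟩
    exfalso
    have hpair := hPt.1
    simp only [List.nil_append, List.cons_append, List.pairwise_cons] at hpair
    have hab := hpair.1 b (by simp)
    have haY : a ∈ Y := hPt.2 a (by simp)
    have hbY : b ∈ Y := hPt.2 b (by simp)
    rcases hch a haY b hbY with h | h
    · exact hab.1 h
    · exact hab.2 h
  exact lt_of_le_of_lt h0 zero_lt_one

theorem oS_cons (hw : IsWqo C) {X : Set C} {a : C} (ha : a ∈ X) :
    nrank (ExtRel (badP X)) [a] = oS {x ∈ X | ¬ a ≤ x} := by
  apply le_antisymm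
  · have := sim (r := ExtRel (badP X)) (r' := ExtRel (badP {x ∈ X | ¬ a ≤ x}))
      (f := List.tail) (Inv := fun u => ∃ v, u = a :: v)
      (hstep := ?_) (x := [a]) ⟨[], rfl⟩ ?_
    · exact this.2
    · rintro x y ⟨v, rfl⟩ ⟨hPy, b, rfl⟩
      refine ⟨⟨v ++ [b], by simp⟩, ?_⟩
      have hpc : (a :: (v ++ [b])).Pairwise (fun a b => ¬ a ≤ b) := by
        simpa using hPy.1
      rw [List.pairwise_cons] at hpc
      have hmem : ∀ c ∈ v ++ [b], c ∈ {x ∈ X | ¬ a ≤ x} := by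
        intro c hc
        exact ⟨hPy.2 c (by simp at hc ⊢; tauto), hpc.1 c hc⟩
      exact ⟨⟨hpc.2, hmem⟩, b, by simp⟩
    · exact accBad hw _ _
  · have := sim (r := ExtRel (badP {x ∈ X | ¬ a ≤ x})) (r' := ExtRel (badP X))
      (f := fun t => a :: t) (Inv := fun _ => True)
      (hstep := ?_) (x := []) trivial (accBad hw X [a])
    · exact this.2
    · rintro x y _ ⟨hPy, b, rfl⟩
      refine ⟨trivial, ⟨?_, ?_⟩, b, rfl⟩
      · rw [List.pairwise_cons]
        exact ⟨fun c hc => (hPy.2 c hc).2, hPy.1⟩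
      · rintro c hc
        rcases List.mem_cons.1 hc with rfl | hc
        · exact ha
        · exact (hPy.2 c hc).1
end WPB

open WPB

open NaturalOps in
/-- Lower bound on the width of a Cartesian product when `w(B) ≥ ω` is additively
indecomposable: `w(A × B) ≥ w(B) · o(A)`. -/
theorem width_prod_lower_bound (A B : Type u) [Preorder A] [Preorder B]
    (hA : IsWqo A) (hB : IsWqo B) (hω : ω ≤ width B)
    (hind : ∀ β γ : Ordinal.{u}, β < width B → γ < width B → β ♯ γ < width B) :
    width B * mot A ≤ width (A × B) := by
  classical
  have hAB : IsWqo (A × B) := isWqo_prod hA hB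
  have accI : ∀ l : List (A × B), Acc (ExtRel fun l : List (A × B) =>
      l.Pairwise fun p q => ¬ p ≤ q ∧ ¬ q ≤ p) l :=
    acc_of_wqo hAB (R := fun p q => ¬ p ≤ q ∧ ¬ q ≤ p) (fun _ _ h => h.1) (fun _ h => h)
  have accwB : ∀ m : List B, Acc (ExtRel fun m : List B =>
      m.Pairwise fun a b => ¬ a ≤ b ∧ ¬ b ≤ a) m :=
    acc_of_wqo hB (R := fun a b => ¬ a ≤ b ∧ ¬ b ≤ a) (fun _ _ h => h.1) (fun _ h => h)
  have accoA : ∀ l : List A, Acc (ExtRel fun l : List A =>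
      l.Pairwise fun a b => ¬ a ≤ b) l :=
    acc_of_wqo hA (R := fun a b => ¬ a ≤ b) (fun _ _ h => h) (fun _ h => h)
  have hwB : width B = wS (Set.univ : Set B) := by
    apply le_antisymm
    · exact nrank_mono_pred (fun l hl => ⟨hl, fun b _ => trivial⟩) [] (accInc hB _ [])
    · exact nrank_mono_pred (fun l hl => hl.1) [] (accwB [])
  have hmot : mot A = oS (Set.univ : Set A) := by
    apply le_antisymm
    · exact nrank_mono_pred (fun l hl => ⟨hl, fun b _ => trivial⟩) [] (accBad hA _ [])
    · exact nrank_mono_pred (fun l hl => hl.1) [] (accoA [])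
  have h1w : (1 : Ordinal) < width B := lt_of_lt_of_le one_lt_omega0 hω
  have wlim : Order.IsSuccLimit (width B) := by
    rw [Order.isSuccLimit_iff_of_orderBot, Order.isSuccPrelimit_iff_succ_lt]
    constructor
    · intro h0
      rw [h0] at hω
      exact absurd (le_antisymm hω bot_le) omega0_ne_zero
    · intro γ hγ
      calc Order.succ γ = γ + 1 := (add_one_eq_succ γ).symm
        _ ≤ γ ♯ 1 := add_le_nadd γ 1
        _ < width B := hind _ _ hγ h1w
  obtain ⟨Ystar, hYfull, hYdown⟩ : ∃ Y : Set B, width B ≤ wS Y ∧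
      ∀ b ∈ Y, wS {y ∈ Y | y ≤ b} < width B := by
    by_contra hno
    push_neg at hno
    have hfullU : width B ≤ wS (Set.univ : Set B) := le_of_eq hwB
    have step : ∀ Y : Set B, width B ≤ wS Y →
        ∃ b, b ∈ Y ∧ width B ≤ wS {y ∈ Y | y ≤ b ∧ ¬ b ≤ y} := by
      intro Y hY
      obtain ⟨b, hbY, hb⟩ := hno Y hY
      refine ⟨b, hbY, ?_⟩
      by_contra hlt
      push_neg at hlt
      have hpart : wS {y ∈ Y | y ≤ b} ≤
          wS {y ∈ Y | y ≤ b ∧ ¬ b ≤ y} ♯ wS {y ∈ Y | y ≤ b ∧ b ≤ y} := by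
        apply wS_partition hB
        rintro y ⟨hy1, hy2⟩
        rcases Classical.em (b ≤ y) with h | h
        · exact Or.inr ⟨hy1, hy2, h⟩
        · exact Or.inl ⟨hy1, hy2, h⟩
      have hch : wS {y ∈ Y | y ≤ b ∧ b ≤ y} ≤ 1 := by
        apply wS_chain_le_one hB
        rintro y ⟨_, hy1, hy2⟩ z ⟨_, hz1, hz2⟩
        exact Or.inl (hy1.trans hz2)
      have h2 : wS {y ∈ Y | y ≤ b} < width B :=
        lt_of_le_of_lt (le_trans hpart (nadd_le_nadd_left hch _)) (hind _ _ hlt h1w)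
      exact absurd hb (not_le.2 h2)
    let next : {Y : Set B // width B ≤ wS Y} → {Y : Set B // width B ≤ wS Y} := fun p =>
      ⟨{y ∈ p.1 | y ≤ (step p.1 p.2).choose ∧ ¬ (step p.1 p.2).choose ≤ y},
       ((step p.1 p.2).choose_spec).2⟩
    let ch : ℕ → {Y : Set B // width B ≤ wS Y} := fun n => next^[n] ⟨Set.univ, hfullU⟩
    let g : ℕ → B := fun n => (step (ch n).1 (ch n).2).choose
    have hg : ∀ n, g n ∈ (ch n).1 := fun n => ((step (ch n).1 (ch n).2).choose_spec).1
    have hch1 : ∀ n, (ch (n + 1)).1 = {y ∈ (ch n).1 | y ≤ g n ∧ ¬ g n ≤ y} := by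
      intro n
      show (next^[n + 1] _).1 = _
      rw [Function.iterate_succ_apply']
    have hmono : ∀ i j : ℕ, i ≤ j → (ch j).1 ⊆ (ch i).1 := by
      intro i j hij
      induction j, hij using Nat.le_induction with
      | base => exact subset_rfl
      | succ n hn IH =>
        rw [hch1 n]
        exact fun y hy => IH hy.1
    obtain ⟨i, j, hij, hle⟩ := hB g
    have hmem : g j ∈ (ch (i + 1)).1 := hmono (i + 1) j hij (hg j)
    rw [hch1 i] at hmem
    exact hmem.2.2 hle
  have hYres : ∀ S : List B, (∀ b ∈ S, b ∈ Ystar) →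
      width B ≤ wS {y ∈ Ystar | ∀ b ∈ S, ¬ y ≤ b} := by
    intro S
    induction S with
    | nil =>
      intro _
      exact le_trans hYfull (wS_mono hB (fun y hy => ⟨hy, by simp⟩))
    | cons b S IH =>
      intro hS
      have hb : b ∈ Ystar := hS b (by simp)
      have hIH := IH (fun c hc => hS c (by simp [hc]))
      by_contra hlt
      push_neg at hlt
      have hpart : wS {y ∈ Ystar | ∀ c ∈ S, ¬ y ≤ c} ≤
          wS {y ∈ Ystar | ∀ c ∈ b :: S, ¬ y ≤ c} ♯ wS {y ∈ Ystar | y ≤ b} := by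
        apply wS_partition hB
        rintro y ⟨hy1, hy2⟩
        rcases Classical.em (y ≤ b) with h | h
        · exact Or.inr ⟨hy1, h⟩
        · refine Or.inl ⟨hy1, fun c hc => ?_⟩
          rcases List.mem_cons.1 hc with rfl | hc
          · exact h
          · exact hy2 c hc
      exact absurd hIH (not_le.2 (lt_of_le_of_lt hpart (hind _ _ hlt (hYdown b hb))))
  have main : ∀ α : Ordinal.{u}, ∀ (X : Set A) (S : List B) (l : List (A × B)),
      α ≤ oS X → (∀ b ∈ S, b ∈ Ystar) →
      l.Pairwise (fun p q => ¬ p ≤ q ∧ ¬ q ≤ p) →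
      (∀ p ∈ l, ∀ x ∈ X, ¬ p.1 ≤ x) → (∀ p ∈ l, p.2 ∈ S) →
      width B * α ≤
        nrank (ExtRel fun l : List (A × B) => l.Pairwise fun p q => ¬ p ≤ q ∧ ¬ q ≤ p) l := by
    intro α
    induction α using Ordinal.induction with
    | h α IH =>
      intro X S l hα hS hl h3 h4
      rcases zero_or_succ_or_isSuccLimit α with rfl | ⟨α', rfl⟩ | hlim
      · simpa using Ordinal.zero_le _
      · rw [mul_succ]
        have hα' : α' < oS X := (Order.succ_le_iff).1 hα
        obtain ⟨t, ht, hrk⟩ := (lt_nrank_iff (accBad hA X [])).1 hα'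
        obtain ⟨hPt, a, rfl⟩ := ht
        have haX : a ∈ X := hPt.2 a (by simp)
        have hα'' : α' ≤ oS {x ∈ X | ¬ a ≤ x} := by
          rw [← oS_cons hA haX]
          simpa using hrk
        have hWfull : width B ≤ wS {y ∈ Ystar | ∀ b ∈ S, ¬ y ≤ b} := hYres S hS
        have hval : ∀ m : List B, (∀ b ∈ m, b ∈ {y ∈ Ystar | ∀ b ∈ S, ¬ y ≤ b}) →
            m.Pairwise (fun a b => ¬ a ≤ b ∧ ¬ b ≤ a) →
            (l ++ m.map fun b => (a, b)).Pairwise (fun p q => ¬ p ≤ q ∧ ¬ q ≤ p) := by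
          intro m hmW hmP
          apply List.pairwise_append.2
          refine ⟨hl, ?_, ?_⟩
          · rw [List.pairwise_map]
            exact hmP.imp (fun hb => ⟨fun hle => hb.1 hle.2, fun hle => hb.2 hle.2⟩)
          · intro p hp q hq
            obtain ⟨b, hbm, rfl⟩ := List.mem_map.1 hq
            constructor
            · intro hle
              exact h3 p hp a haX hle.1
            · intro hle
              exact (hmW b hbm).2 p.2 (h4 p hp) hle.2
        have inner : ∀ β : Ordinal.{u}, ∀ m : List B,
            (∀ b ∈ m, b ∈ {y ∈ Ystar | ∀ b ∈ S, ¬ y ≤ b}) →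
            m.Pairwise (fun a b => ¬ a ≤ b ∧ ¬ b ≤ a) →
            β ≤ nrank (ExtRel (incP {y ∈ Ystar | ∀ b ∈ S, ¬ y ≤ b})) m →
            width B * α' + β ≤
              nrank (ExtRel fun l : List (A × B) => l.Pairwise fun p q => ¬ p ≤ q ∧ ¬ q ≤ p)
                (l ++ m.map fun b => (a, b)) := by
          intro β
          induction β using Ordinal.induction with
          | h β IHβ =>
            intro m hmW hmP hβ
            rcases zero_or_succ_or_isSuccLimit β with rfl | ⟨γ, rfl⟩ | hβlim
            · rw [add_zero]
              apply IH α' (Order.lt_succ α') {x ∈ X | ¬ a ≤ x} (S ++ m) _ hα''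
              · intro b hb
                rcases List.mem_append.1 hb with hb | hb
                · exact hS b hb
                · exact (hmW b hb).1
              · exact hval m hmW hmP
              · intro p hp x hx
                rcases List.mem_append.1 hp with hp | hp
                · exact h3 p hp x hx.1
                · obtain ⟨b, hbm, rfl⟩ := List.mem_map.1 hp
                  exact hx.2
              · intro p hp
                rcases List.mem_append.1 hp with hp | hp
                · exact List.mem_append_left _ (h4 p hp)
                · obtain ⟨b, hbm, rfl⟩ := List.mem_map.1 hp
                  exact List.mem_append_right _ hbm
            · have hγ : γ < nrank (ExtRel (incP {y ∈ Ystar | ∀ b ∈ S, ¬ y ≤ b})) m :=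
                lt_of_lt_of_le (Order.lt_succ γ) hβ
              obtain ⟨m₂, hm₂, hγ₂⟩ := (lt_nrank_iff (accInc hB _ m)).1 hγ
              obtain ⟨hPm₂, b, rfl⟩ := hm₂
              have hrec := IHβ γ (Order.lt_succ γ) (m ++ [b])
                (fun c hc => hPm₂.2 c hc) hPm₂.1 hγ₂
              rw [add_succ, Order.succ_le_iff]
              have hchild : ExtRel (fun l : List (A × B) =>
                    l.Pairwise fun p q => ¬ p ≤ q ∧ ¬ q ≤ p)
                  (l ++ ((m ++ [b]).map fun b => (a, b)))
                  (l ++ m.map fun b => (a, b)) := by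
                refine ⟨hval _ (fun c hc => hPm₂.2 c hc) hPm₂.1, (a, b), ?_⟩
                simp
              exact lt_of_le_of_lt hrec (nrank_lt_of_rel (accI _) hchild)
            · rw [add_le_iff_of_isSuccLimit hβlim]
              intro γ hγ
              exact IHβ γ hγ m hmW hmP (le_trans hγ.le hβ)
        rw [add_le_iff_of_isSuccLimit wlim]
        intro β hβ
        have hβW : β ≤ nrank (ExtRel (incP {y ∈ Ystar | ∀ b ∈ S, ¬ y ≤ b})) [] :=
          le_of_lt (lt_of_lt_of_le hβ hWfull)
        have := inner β [] (by simp) List.Pairwise.nil hβW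
        simpa using this
      · rw [mul_le_iff_of_isSuccLimit hlim]
        intro α' hα'
        exact IH α' hα' X S l (le_trans hα'.le hα) hS hl h3 h4
  have h0 : mot A ≤ oS (Set.univ : Set A) := le_of_eq hmot
  have hfin := main (mot A) Set.univ [] [] h0 (by simp) List.Pairwise.nil (by simp) (by simp)
  exact hfin
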